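/- arXiv:math/9606212 — 4 statements merged into one kernel-verified Lean document; each statement's English description precedes it below -/
import Mathlib

section
/- Let 0 → Y →^i Z →^j W → 0 be a short exact sequence of Banach spaces whose dual sequence 0 → W* →^{j*} Z* →^{i*} Y* → 0 is split (i.e., i* admits a bounded right inverse). Then for every Banach space X, the dual of the sequence 0 → X ⊗̂ Y → X ⊗̂ Z → X ⊗̂ W → 0 (with maps id_X ⊗ i, id_X ⊗ j) is also split. -/
open NormedSpace

/-- A Banach space `T` together with a bounded bilinear map `φ : X × Y → T` is *the*
projective tensor product `X ⊗̂ Y`. -/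
structure IsProjectiveTensorProduct
    (X Y T : Type*)
    [NormedAddCommGroup X] [NormedSpace ℝ X]
    [NormedAddCommGroup Y] [NormedSpace ℝ Y]
    [NormedAddCommGroup T] [NormedSpace ℝ T] [CompleteSpace T]
    (φ : X →L[ℝ] Y →L[ℝ] T) : Prop where
  dense : (Submodule.span ℝ {t : T | ∃ x y, t = φ x y}).topologicalClosure = ⊤
  lift : ∀ (W : Type) [NormedAddCommGroup W] [NormedSpace ℝ W] [CompleteSpace W]
      (b : X →L[ℝ] Y →L[ℝ] W),
      ∃ g : T →L[ℝ] W, (∀ x y, g (φ x y) = b x y) ∧ ‖g‖ = ‖b‖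

/-! Under `(X ⊗̂ A)* ≅ B(X, A*)` the adjoint of `id_X ⊗ i` is postcomposition with `i*`. A right
inverse `ρ` of `i*` comes with a complement `σ`, with `ρ i* + j* σ = id`, obtained by factoring
`id - ρ i*` through the quotient map `j`; postcomposing with `ρ` and `σ` then splits the tensored
dual sequence, and the identities need only be checked on elementary tensors, whose span is dense. -/

open ContinuousLinearMap

section Descent

variable {Z W V : Type*}
  [NormedAddCommGroup Z] [NormedSpace ℝ Z] [CompleteSpace Z]
  [NormedAddCommGroup W] [NormedSpace ℝ W] [CompleteSpace W]
  [NormedAddCommGroup V] [NormedSpace ℝ V]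
  {j : Z →L[ℝ] W}

/-- Continuity of the factorisation comes from `j` being a quotient map (open mapping theorem). -/
theorem ContinuousLinearMap.exists_comp_eq_of_ker_le (hj : Function.Surjective j)
    (f : Z →L[ℝ] V) (hf : LinearMap.ker (j : Z →ₗ[ℝ] W) ≤ LinearMap.ker (f : Z →ₗ[ℝ] V)) :
    ∃ g : W →L[ℝ] V, g.comp j = f := by
  let g : W →ₗ[ℝ] V := ((LinearMap.ker (j : Z →ₗ[ℝ] W)).liftQ f hf).comp
    ((j : Z →ₗ[ℝ] W).quotKerEquivOfSurjective hj).symm.toLinearMap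
  have hgj : ∀ z, g (j z) = f z := fun z => by
    have hmk := (j : Z →ₗ[ℝ] W).quotKerEquivOfSurjective_symm_apply hj z
    simp only [coe_coe] at hmk
    simp [g, hmk]
  have hcont : Continuous g :=
    (j.isQuotientMap hj).continuous_iff.mpr (by simpa [Function.comp_def, hgj] using f.continuous)
  exact ⟨⟨g, hcont⟩, ext hgj⟩

theorem ContinuousLinearMap.exists_opNorm_le_mul_opNorm_comp (hj : Function.Surjective j) :
    ∃ C, 0 ≤ C ∧ ∀ g : W →L[ℝ] V, ‖g‖ ≤ C * ‖g.comp j‖ := by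
  obtain ⟨C, hC, hpre⟩ := j.exists_preimage_norm_le hj
  refine ⟨C, hC.le, fun g => g.opNorm_le_bound (by positivity) fun w => ?_⟩
  obtain ⟨z, rfl, hz⟩ := hpre w
  calc ‖g (j z)‖ = ‖g.comp j z‖ := rfl
    _ ≤ ‖g.comp j‖ * ‖z‖ := le_opNorm _ _
    _ ≤ ‖g.comp j‖ * (C * ‖j z‖) := by gcongr
    _ = C * ‖g.comp j‖ * ‖j z‖ := by ring

theorem ContinuousLinearMap.exists_comp_eq_of_forall_ker_le {S : Type*}
    [NormedAddCommGroup S] [NormedSpace ℝ S] (hj : Function.Surjective j)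
    (τ : S →L[ℝ] Z →L[ℝ] V)
    (hτ : ∀ s, LinearMap.ker (j : Z →ₗ[ℝ] W) ≤ LinearMap.ker (τ s : Z →ₗ[ℝ] V)) :
    ∃ σ : S →L[ℝ] W →L[ℝ] V, ∀ s, (σ s).comp j = τ s := by
  choose g hg using fun s => j.exists_comp_eq_of_ker_le hj (τ s) (hτ s)
  have cancel : ∀ {g₁ g₂ : W →L[ℝ] V}, g₁.comp j = g₂.comp j → g₁ = g₂ := fun h =>
    ext fun w => by obtain ⟨z, rfl⟩ := hj w; exact congr($h z)
  obtain ⟨C, hC, hbound⟩ := j.exists_opNorm_le_mul_opNorm_comp (V := V) hj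
  let σ : S →ₗ[ℝ] W →L[ℝ] V :=
    { toFun := g
      map_add' := fun s s' => cancel (by simp [add_comp, hg])
      map_smul' := fun c s => cancel (by simp [smul_comp, hg]) }
  refine ⟨σ.mkContinuous (C * ‖τ‖) fun s => ?_, hg⟩
  calc ‖g s‖ ≤ C * ‖τ s‖ := by simpa [hg] using hbound (g s)
    _ ≤ C * (‖τ‖ * ‖s‖) := by gcongr; exact τ.le_opNorm s
    _ = C * ‖τ‖ * ‖s‖ := by ring

end Descent

theorem exists_dual_complement {Y Z W : Type*}
    [NormedAddCommGroup Y] [NormedSpace ℝ Y]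
    [NormedAddCommGroup Z] [NormedSpace ℝ Z] [CompleteSpace Z]
    [NormedAddCommGroup W] [NormedSpace ℝ W] [CompleteSpace W]
    (i : Y →L[ℝ] Z) (j : Z →L[ℝ] W) (hj : Function.Surjective j)
    (hexact : LinearMap.range (i : Y →ₗ[ℝ] Z) = LinearMap.ker (j : Z →ₗ[ℝ] W))
    (ρ : StrongDual ℝ Y →L[ℝ] StrongDual ℝ Z) (hρ : ∀ f : StrongDual ℝ Y, (ρ f).comp i = f) :
    ∃ σ : StrongDual ℝ Z →L[ℝ] StrongDual ℝ W,
      (∀ g : StrongDual ℝ W, σ (g.comp j) = g) ∧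
      ∀ h : StrongDual ℝ Z, ρ (h.comp i) + (σ h).comp j = h := by
  let τ : StrongDual ℝ Z →L[ℝ] StrongDual ℝ Z :=
    ContinuousLinearMap.id ℝ _ - ρ.comp ((compL ℝ Y Z ℝ).flip i)
  have hτ : ∀ h, τ h = h - ρ (h.comp i) := fun h => by simp [τ]
  obtain ⟨σ, hσ⟩ := j.exists_comp_eq_of_forall_ker_le hj τ fun h z hz => by
    obtain ⟨y, rfl⟩ : z ∈ LinearMap.range (i : Y →ₗ[ℝ] Z) := hexact ▸ hz
    simpa [hτ, sub_eq_zero] using congr($(hρ (h.comp i)) y).symm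
  have hji : j.comp i = 0 :=
    ext fun y => LinearMap.mem_ker.mp (hexact.le (LinearMap.mem_range_self _ y))
  refine ⟨σ, fun g => ext fun w => ?_, fun h => by rw [hσ, hτ, add_sub_cancel]⟩
  obtain ⟨z, rfl⟩ := hj w
  simpa [hτ, comp_assoc, hji] using congr($(hσ (g.comp j)) z)

namespace IsProjectiveTensorProduct

variable {X A T : Type*}
  [NormedAddCommGroup X] [NormedSpace ℝ X]
  [NormedAddCommGroup A] [NormedSpace ℝ A]
  [NormedAddCommGroup T] [NormedSpace ℝ T] [CompleteSpace T]
  {φ : X →L[ℝ] A →L[ℝ] T}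

theorem ext (hT : IsProjectiveTensorProduct X A T φ) {S : Type*}
    [NormedAddCommGroup S] [NormedSpace ℝ S] {f g : T →L[ℝ] S}
    (h : ∀ x a, f (φ x a) = g (φ x a)) : f = g := by
  have hdense := Submodule.dense_iff_topologicalClosure_eq_top.mpr hT.dense
  refine DFunLike.coe_injective (Continuous.ext_on hdense f.continuous g.continuous fun t ht => ?_)
  exact LinearMap.eqOn_span (by rintro _ ⟨x, a, rfl⟩; exact h x a) ht

/-- The isometry `(X ⊗̂ A)* ≅ B(X, A*)`, applied to a bounded family of operators. -/
theorem exists_dual_lift (hT : IsProjectiveTensorProduct X A T φ) {S : Type*}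
    [NormedAddCommGroup S] [NormedSpace ℝ S] (b : S →L[ℝ] X →L[ℝ] StrongDual ℝ A) :
    ∃ Γ : S →L[ℝ] StrongDual ℝ T, ∀ s x a, Γ s (φ x a) = b s x a := by
  choose g hg hnorm using fun s => hT.lift ℝ (b s)
  let Γ : S →ₗ[ℝ] StrongDual ℝ T :=
    { toFun := g
      map_add' := fun s s' => hT.ext fun x a => by simp [hg]
      map_smul' := fun c s => hT.ext fun x a => by simp [hg] }
  obtain ⟨C, -, hC⟩ := (isBoundedLinearMap (𝕜 := ℝ) (E := S)
    (F := X →L[ℝ] StrongDual ℝ A) b).bound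
  exact ⟨Γ.mkContinuous C fun s => (hnorm s).le.trans (hC s), hg⟩

/-- Postcomposition with `Λ`, transported through `(X ⊗̂ A)* ≅ B(X, A*)`. -/
theorem exists_dual_lTensor (hT : IsProjectiveTensorProduct X A T φ) {B U : Type*}
    [NormedAddCommGroup B] [NormedSpace ℝ B] [NormedAddCommGroup U] [NormedSpace ℝ U]
    (ψ : X →L[ℝ] B →L[ℝ] U) (Λ : StrongDual ℝ B →L[ℝ] StrongDual ℝ A) :
    ∃ Γ : StrongDual ℝ U →L[ℝ] StrongDual ℝ T,
      ∀ F x a, Γ F (φ x a) = Λ (F.comp (ψ x)) a :=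
  hT.exists_dual_lift <| (compL ℝ X _ _ Λ).comp
    (((compL ℝ X (B →L[ℝ] U) (StrongDual ℝ B)).flip ψ).comp (compL ℝ B U ℝ))

end IsProjectiveTensorProduct

theorem weak_admissibility_preserved_by_projective_tensoring_general
    {Y Z W X : Type*}
    [NormedAddCommGroup Y] [NormedSpace ℝ Y]
    [NormedAddCommGroup Z] [NormedSpace ℝ Z] [CompleteSpace Z]
    [NormedAddCommGroup W] [NormedSpace ℝ W] [CompleteSpace W]
    [NormedAddCommGroup X] [NormedSpace ℝ X]
    (i : Y →L[ℝ] Z) (j : Z →L[ℝ] W)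
    (hj : Function.Surjective j)
    (hexact : LinearMap.range (i : Y →ₗ[ℝ] Z) = LinearMap.ker (j : Z →ₗ[ℝ] W))
    -- weak admissibility: the dual sequence splits
    (hsplit : ∃ ρ : StrongDual ℝ Y →L[ℝ] StrongDual ℝ Z, ∀ f : StrongDual ℝ Y, (ρ f).comp i = f)
    -- the projective tensor products X ⊗̂ Y, X ⊗̂ Z, X ⊗̂ W
    {TY TZ TW : Type*}
    [NormedAddCommGroup TY] [NormedSpace ℝ TY] [CompleteSpace TY]
    [NormedAddCommGroup TZ] [NormedSpace ℝ TZ] [CompleteSpace TZ]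
    [NormedAddCommGroup TW] [NormedSpace ℝ TW] [CompleteSpace TW]
    (φY : X →L[ℝ] Y →L[ℝ] TY) (hTY : IsProjectiveTensorProduct X Y TY φY)
    (φZ : X →L[ℝ] Z →L[ℝ] TZ) (hTZ : IsProjectiveTensorProduct X Z TZ φZ)
    (φW : X →L[ℝ] W →L[ℝ] TW) (hTW : IsProjectiveTensorProduct X W TW φW)
    -- the maps id_X ⊗ i and id_X ⊗ j
    (iT : TY →L[ℝ] TZ) (hiT : ∀ x y, iT (φY x y) = φZ x (i y))
    (jT : TZ →L[ℝ] TW) (hjT : ∀ x z, jT (φZ x z) = φW x (j z)) :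
    ∃ (γ : StrongDual ℝ TY →L[ℝ] StrongDual ℝ TZ) (η : StrongDual ℝ TZ →L[ℝ] StrongDual ℝ TW),
      (∀ f : StrongDual ℝ TY, (γ f).comp iT = f) ∧
      (∀ g : StrongDual ℝ TW, η (g.comp jT) = g) ∧
      (∀ h : StrongDual ℝ TZ, γ (h.comp iT) + (η h).comp jT = h) := by
  obtain ⟨ρ, hρ⟩ := hsplit
  obtain ⟨σ, hσ, hρσ⟩ := exists_dual_complement i j hj hexact ρ hρ
  obtain ⟨γ, hγ⟩ := hTZ.exists_dual_lTensor φY ρ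
  obtain ⟨η, hη⟩ := hTW.exists_dual_lTensor φZ σ
  have comp_iT : ∀ (h : StrongDual ℝ TZ) x, (h.comp iT).comp (φY x) = (h.comp (φZ x)).comp i :=
    fun h x => ext fun y => by simp [hiT]
  have comp_jT : ∀ (g : StrongDual ℝ TW) x, (g.comp jT).comp (φZ x) = (g.comp (φW x)).comp j :=
    fun g x => ext fun z => by simp [hjT]
  refine ⟨γ, η, fun f => hTY.ext fun x y => ?_, fun g => hTW.ext fun x w => ?_,
    fun h => hTZ.ext fun x z => ?_⟩
  · simpa [hiT, hγ] using congr($(hρ (f.comp (φY x))) y)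
  · rw [hη, comp_jT, hσ, comp_apply]
  · simpa [hγ, hη, hjT, comp_iT] using congr($(hρσ (h.comp (φZ x))) z)

/-- Lemma 3.3: Let 0 → Y →^i Z →^j W → 0 be a short exact sequence of
Banach spaces whose dual sequence is split (i* admits a bounded right inverse).
Then for every Banach space X the dual of the tensored sequence
0 → X ⊗̂ Y → X ⊗̂ Z → X ⊗̂ W → 0 (maps id⊗i, id⊗j) is also split: there are bounded
operators γ : (X⊗̂Y)* → (X⊗̂Z)* and η : (X⊗̂Z)* → (X⊗̂W)* with
(id⊗i)* ∘ γ = id, η ∘ (id⊗j)* = id and γ ∘ (id⊗i)* + (id⊗j)* ∘ η = id. -/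
theorem weak_admissibility_preserved_by_projective_tensoring
    {Y Z W X : Type*}
    [NormedAddCommGroup Y] [NormedSpace ℝ Y] [CompleteSpace Y]
    [NormedAddCommGroup Z] [NormedSpace ℝ Z] [CompleteSpace Z]
    [NormedAddCommGroup W] [NormedSpace ℝ W] [CompleteSpace W]
    [NormedAddCommGroup X] [NormedSpace ℝ X] [CompleteSpace X]
    (i : Y →L[ℝ] Z) (j : Z →L[ℝ] W)
    (hi : Function.Injective i) (hj : Function.Surjective j)
    (hexact : LinearMap.range (i : Y →ₗ[ℝ] Z) = LinearMap.ker (j : Z →ₗ[ℝ] W))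
    -- weak admissibility: the dual sequence splits
    (hsplit : ∃ ρ : StrongDual ℝ Y →L[ℝ] StrongDual ℝ Z, ∀ f : StrongDual ℝ Y, (ρ f).comp i = f)
    -- the projective tensor products X ⊗̂ Y, X ⊗̂ Z, X ⊗̂ W
    {TY TZ TW : Type*}
    [NormedAddCommGroup TY] [NormedSpace ℝ TY] [CompleteSpace TY]
    [NormedAddCommGroup TZ] [NormedSpace ℝ TZ] [CompleteSpace TZ]
    [NormedAddCommGroup TW] [NormedSpace ℝ TW] [CompleteSpace TW]
    (φY : X →L[ℝ] Y →L[ℝ] TY) (hTY : IsProjectiveTensorProduct X Y TY φY)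
    (φZ : X →L[ℝ] Z →L[ℝ] TZ) (hTZ : IsProjectiveTensorProduct X Z TZ φZ)
    (φW : X →L[ℝ] W →L[ℝ] TW) (hTW : IsProjectiveTensorProduct X W TW φW)
    -- the maps id_X ⊗ i and id_X ⊗ j
    (iT : TY →L[ℝ] TZ) (hiT : ∀ x y, iT (φY x y) = φZ x (i y))
    (jT : TZ →L[ℝ] TW) (hjT : ∀ x z, jT (φZ x z) = φW x (j z)) :
    ∃ (γ : StrongDual ℝ TY →L[ℝ] StrongDual ℝ TZ) (η : StrongDual ℝ TZ →L[ℝ] StrongDual ℝ TW),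
      (∀ f : StrongDual ℝ TY, (γ f).comp iT = f) ∧
      (∀ g : StrongDual ℝ TW, η (g.comp jT) = g) ∧
      (∀ h : StrongDual ℝ TZ, γ (h.comp iT) + (η h).comp jT = h) :=
  weak_admissibility_preserved_by_projective_tensoring_general i j hj hexact hsplit φY hTY φZ hTZ φW
    hTW iT hiT jT hjT
end

section
/- Let 0 → Y →^i Z →^j W → 0 be a weakly admissible short exact sequence of Banach spaces. Then for every n ≥ 1, the kernel of j^⊗̂n : Z^⊗̂n → W^⊗̂n equals the sum of closed subspaces Z^⊗̂(n-1) ⊗̂ i(Y) + Z^⊗̂(n-2) ⊗̂ i(Y) ⊗̂ Z + ⋯ + i(Y) ⊗̂ Z^⊗̂(n-1); in particular it is the closed linear span of elementary tensors z_1 ⊗ ⋯ ⊗ z_n in which at least one z_k belongs to i(Y). -/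
/-!
Each `Z^⊗̂k ⊗̂ i(Y) ⊗̂ Z^⊗̂(n-1-k)` lies in the closed subspace `ker j^⊗̂n`. Conversely, a functional
`G` on `Z^⊗̂n` that vanishes on all of them makes `G ∘ φZ` a bounded multilinear form on `Zⁿ`
that only depends on the classes modulo `ker j`; composing with a bounded (nonlinear) section of
`j`, given by the open mapping theorem, it becomes a bounded form on `Wⁿ`, so `G` factors through
`j^⊗̂n` and kills its kernel. By Hahn–Banach the kernel is the closed span of the elementary
tensors with a factor in `i(Y)`.

What remains is that the algebraic sum of the closed subspaces is already closed, and this is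
where weak admissibility enters. A splitting `ρ` of `i*` lets one copy a functional given on the
`k`-th subspace to the whole of `Z^⊗̂n`, with norm controlled by the restriction and without
destroying vanishing on the other subspaces. For closed `M`, `L` in a Banach space, such bounded
lifts of functionals of `M^⊥` from `L` force `M + L` to be closed (dually, the closed range theorem
for `L → X/M`): a Hahn–Banach separation gives an approximate decomposition of every point of the
closure, and successive approximation makes it exact.
-/

open NormedSpace

/-- A Banach space `T` together with a bounded `n`-linear map `φ : Xⁿ → T` is *the*
`n`-fold projective tensor power `X^⊗̂n`. -/
structure IsProjectiveTensorPower
    (X : Type*) [NormedAddCommGroup X] [NormedSpace ℝ X]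
    (n : ℕ)
    (T : Type*) [NormedAddCommGroup T] [NormedSpace ℝ T] [CompleteSpace T]
    (φ : ContinuousMultilinearMap ℝ (fun _ : Fin n => X) T) : Prop where
  dense : (Submodule.span ℝ (Set.range ⇑φ)).topologicalClosure = ⊤
  lift : ∀ (W : Type) [NormedAddCommGroup W] [NormedSpace ℝ W] [CompleteSpace W]
      (m : ContinuousMultilinearMap ℝ (fun _ : Fin n => X) W),
      ∃ g : T →L[ℝ] W, (∀ v, g (φ v) = m v) ∧ ‖g‖ = ‖m‖

open Metric Pointwise Function Filter Topology Submodule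

theorem Submodule.le_ker_of_forall_lt {M : Type*} [AddCommGroup M] [Module ℝ M]
    {p : Submodule ℝ M} {f : M →ₗ[ℝ] ℝ} {c : ℝ} (h : ∀ x ∈ p, f x < c) :
    p ≤ LinearMap.ker f := by
  intro x hx
  rw [LinearMap.mem_ker]
  by_contra hfx
  have := h ((c / f x) • x) (p.smul_mem _ hx)
  rw [map_smul, smul_eq_mul, div_mul_cancel₀ c hfx] at this
  exact lt_irrefl c this

theorem Submodule.mem_topologicalClosure_of_forall_dual {E : Type*} [NormedAddCommGroup E]
    [NormedSpace ℝ E] {p : Submodule ℝ E} {x : E}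
    (h : ∀ f : StrongDual ℝ E, p ≤ LinearMap.ker (f : E →ₗ[ℝ] ℝ) → f x = 0) :
    x ∈ p.topologicalClosure := by
  by_contra hx
  obtain ⟨f, u, hfu, hux⟩ :=
    geometric_hahn_banach_closed_point p.topologicalClosure.convex p.isClosed_topologicalClosure hx
  have hu : 0 < u := by simpa using hfu 0 (zero_mem _)
  rw [h f (p.le_topologicalClosure.trans (Submodule.le_ker_of_forall_lt hfu))] at hux
  linarith

theorem ContinuousLinearMap.norm_apply_le_mul_infDist {𝕜 E F : Type*} [NontriviallyNormedField 𝕜]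
    [NormedAddCommGroup E] [NormedSpace 𝕜 E] [NormedAddCommGroup F] [NormedSpace 𝕜 F]
    (f : E →L[𝕜] F) {p : Submodule 𝕜 E} (hp : p ≤ LinearMap.ker (f : E →ₗ[𝕜] F)) (x : E) :
    ‖f x‖ ≤ ‖f‖ * infDist x p := by
  rw [infDist_eq_iInf, Real.mul_iInf_of_nonneg (norm_nonneg f)]
  have : Nonempty (p : Set E) := ⟨⟨0, p.zero_mem⟩⟩
  refine le_ciInf fun ⟨m, hm⟩ => ?_
  calc ‖f x‖ = ‖f (x - m)‖ := by rw [map_sub, show f m = 0 from hp hm, sub_zero]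
    _ ≤ ‖f‖ * dist x m := by rw [dist_eq_norm]; exact f.le_opNorm _

theorem ContinuousLinearMap.norm_comp_subtypeL_le_of_forall_lt {E : Type*} [NormedAddCommGroup E]
    [NormedSpace ℝ E] (f : StrongDual ℝ E) (p : Submodule ℝ E) {r c : ℝ} (hr : 0 < r)
    (h : ∀ x ∈ p, ‖x‖ ≤ r → f x < c) : ‖f.comp p.subtypeL‖ ≤ c / r := by
  refine opNorm_bound_of_ball_bound hr _ _ fun x hx => ?_
  have hxr : ‖(x : E)‖ ≤ r := by simpa using hx
  have h₁ := h x x.2 hxr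
  have h₂ := h (-x) (p.neg_mem x.2) (by simpa using hxr)
  rw [map_neg] at h₂
  rw [Real.norm_eq_abs, abs_le]
  constructor <;> simp <;> linarith

section ClosedSum

variable {X : Type*} [NormedAddCommGroup X] [NormedSpace ℝ X] {M L : Submodule ℝ X} {C : ℝ}

/-- The restriction map `M^⊥ → L^*` is open onto its image, with constant `C`. -/
def Submodule.HasBoundedAnnihilatorLift (M L : Submodule ℝ X) (C : ℝ) : Prop :=
  ∀ G : StrongDual ℝ X, M ≤ LinearMap.ker (G : X →ₗ[ℝ] ℝ) → ∃ G' : StrongDual ℝ X,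
    M ≤ LinearMap.ker (G' : X →ₗ[ℝ] ℝ) ∧ (∀ l ∈ L, G' l = G l) ∧ ‖G'‖ ≤ C * ‖G.comp L.subtypeL‖

theorem Submodule.exists_approx_decomposition (hC : 0 ≤ C)
    (hext : M.HasBoundedAnnihilatorLift L C)
    {x : X} (hx : x ∈ (M ⊔ L).topologicalClosure) {ε : ℝ} (hε : 0 < ε) :
    ∃ l ∈ L, ‖l‖ ≤ C * infDist x M + ε ∧ infDist (x - l) M < ε := by
  by_contra! hfar
  set r := C * infDist x M + ε
  have hr : 0 < r := by have : 0 ≤ infDist x M := infDist_nonneg; positivity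
  set V : Set X := ((L : Set X) ∩ closedBall 0 r) + (M : Set X) + ball 0 ε
  have hmemV : ∀ l ∈ L, ‖l‖ ≤ r → ∀ m ∈ M, l + m ∈ V := fun l hl hlr m hm =>
    ⟨l + m, ⟨l, ⟨hl, by simpa using hlr⟩, m, hm, rfl⟩, 0, by simpa using hε, add_zero _⟩
  have hxV : x ∉ V := by
    rintro ⟨_, ⟨l, ⟨hl, hlr⟩, m, hm, rfl⟩, b, hb, rfl⟩
    have hdist : infDist (l + m + b - l) M ≤ ‖b‖ := by
      have := infDist_le_dist_of_mem (x := l + m + b - l) hm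
      rwa [dist_eq_norm, show l + m + b - l - m = b by abel] at this
    have := hfar l hl (by simpa using hlr)
    rw [mem_ball_zero_iff] at hb
    linarith
  have hVconv : Convex ℝ V :=
    ((L.convex.inter (convex_closedBall 0 r)).add M.convex).add (convex_ball 0 ε)
  obtain ⟨G, hG⟩ := geometric_hahn_banach_open_point hVconv (isOpen_ball.add_left) hxV
  have hMV : ∀ m ∈ M, m ∈ V := fun m hm => by
    simpa using hmemV 0 L.zero_mem (by simp [hr.le]) m hm
  have hGM : M ≤ LinearMap.ker (G : X →ₗ[ℝ] ℝ) := le_ker_of_forall_lt fun m hm => hG _ (hMV m hm)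
  have hGx : 0 < G x := by simpa using hG 0 (hMV 0 M.zero_mem)
  have hGL : ‖G.comp L.subtypeL‖ ≤ G x / r := G.norm_comp_subtypeL_le_of_forall_lt L hr
    fun l hl hlr => hG _ (by simpa using hmemV l hl hlr 0 M.zero_mem)
  obtain ⟨G', hG'M, hG'L, hG'norm⟩ := hext G hGM
  have hGG' : G x = G' x := by
    have hsup : M ⊔ L ≤ LinearMap.ker ((G - G' : StrongDual ℝ X) : X →ₗ[ℝ] ℝ) := sup_le
      (fun m hm => by simp [show G m = 0 from hGM hm, show G' m = 0 from hG'M hm])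
      (fun l hl => by simp [hG'L l hl])
    simpa [sub_eq_zero] using (M ⊔ L).topologicalClosure_minimal hsup (G - G').isClosed_ker hx
  have key : G x ≤ C * (G x / r) * infDist x M :=
    calc G x ≤ ‖G' x‖ := hGG' ▸ Real.le_norm_self _
      _ ≤ ‖G'‖ * infDist x M := G'.norm_apply_le_mul_infDist hG'M x
      _ ≤ C * (G x / r) * infDist x M := by
        gcongr
        · exact infDist_nonneg
        · exact hG'norm.trans (by gcongr)
  rw [mul_div_assoc', div_mul_eq_mul_div, le_div_iff₀ hr] at key
  nlinarith

theorem Submodule.mem_sup_of_tendsto_infDist (hM : IsClosed (M : Set X))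
    (hL : IsClosed (L : Set X)) {l : ℕ → X} {s t : X} (hl : ∀ k, l k ∈ L) (hs : HasSum l s)
    (ht : Tendsto (fun k => infDist (t - ∑ j ∈ Finset.range k, l j) M) atTop (𝓝 0)) :
    t ∈ M ⊔ L := by
  have hsL : s ∈ L := hL.mem_of_tendsto hs.tendsto_sum_nat
    (Eventually.of_forall fun _ => L.sum_mem fun k _ => hl k)
  have hlim := ((continuous_infDist_pt (M : Set X)).tendsto (t - s)).comp
    (tendsto_const_nhds.sub hs.tendsto_sum_nat)
  have htsM : t - s ∈ M := by
    rw [← SetLike.mem_coe, ← hM.closure_eq, mem_closure_iff_infDist_zero ⟨0, M.zero_mem⟩]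
    exact tendsto_nhds_unique hlim ht
  simpa using add_mem (mem_sup_left htsM) (mem_sup_right hsL)

theorem Submodule.isClosed_sup_of_hasBoundedAnnihilatorLift [CompleteSpace X]
    (hM : IsClosed (M : Set X)) (hL : IsClosed (L : Set X)) (hC : 0 ≤ C)
    (hext : M.HasBoundedAnnihilatorLift L C) : IsClosed ((M ⊔ L : Submodule ℝ X) : Set X) := by
  set S := (M ⊔ L).topologicalClosure
  refine isClosed_of_closure_subset fun t ht => ?_
  rw [← Submodule.topologicalClosure_coe] at ht
  choose! l hlL hlnorm hldist using fun x (hx : x ∈ S) (k : ℕ) =>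
    exists_approx_decomposition hC hext hx (pow_pos (by norm_num : (0 : ℝ) < 1 / 2) (k + 1))
  let x : ℕ → X := fun k => Nat.rec t (fun k y => y - l y k) k
  have hxS : ∀ k, x k ∈ S := fun k => by
    induction k with
    | zero => exact ht
    | succ k ih =>
      exact S.sub_mem ih ((M ⊔ L).le_topologicalClosure (mem_sup_right (hlL _ ih k)))
  have hx_eq : ∀ k, x k = t - ∑ j ∈ Finset.range k, l (x j) j := fun k => by
    induction k with
    | zero => simp [x]
    | succ k ih => rw [Finset.sum_range_succ, sub_add_eq_sub_sub, ← ih]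
  set d₀ := infDist t M
  have hd₀ : 0 ≤ d₀ := infDist_nonneg
  have hdist : ∀ k, infDist (x k) M ≤ (d₀ + 1) * (1 / 2) ^ k := fun k => by
    cases k with
    | zero => show d₀ ≤ (d₀ + 1) * (1 / 2) ^ 0; simp
    | succ k =>
      exact (hldist _ (hxS k) k).le.trans (le_mul_of_one_le_left (by positivity) (by linarith))
  have hlk : ∀ k, ‖l (x k) k‖ ≤ (C * (d₀ + 1) + 1) * (1 / 2) ^ k := fun k => by
    have h₁ := hlnorm _ (hxS k) k
    have h₂ := mul_le_mul_of_nonneg_left (hdist k) hC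
    rw [pow_succ] at h₁
    nlinarith [pow_pos (by norm_num : (0 : ℝ) < 1 / 2) k]
  refine mem_sup_of_tendsto_infDist hM hL (fun k => hlL _ (hxS k) k)
    (Summable.of_norm_bounded (summable_geometric_two.mul_left _) hlk).hasSum ?_
  simp_rw [← hx_eq]
  exact squeeze_zero (fun _ => infDist_nonneg) hdist (by
    simpa using (tendsto_pow_atTop_nhds_zero_of_lt_one (by norm_num : (0 : ℝ) ≤ 1 / 2)
      (by norm_num)).const_mul (d₀ + 1))

end ClosedSum

theorem MultilinearMap.map_eq_of_forall_sub_mem {R ι M N : Type*} [CommRing R] [AddCommGroup M]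
    [Module R M] [AddCommGroup N] [Module R N] [Fintype ι]
    (f : MultilinearMap R (fun _ : ι => M) N) {K : Submodule R M}
    (hf : ∀ v k, v k ∈ K → f v = 0) {v v' : ι → M} (h : ∀ k, v k - v' k ∈ K) : f v = f v' := by
  classical
  rw [show v = (v - v') + v' by simp, f.map_add_univ, Finset.sum_eq_single ∅]
  · simp
  · intro s _ hs
    obtain ⟨k, hk⟩ := Finset.nonempty_iff_ne_empty.2 hs
    exact hf _ k (by simpa [Finset.piecewise_eq_of_mem _ _ _ hk] using h k)
  · simp

theorem ContinuousMultilinearMap.exists_comp_eq_of_surjective {𝕜 ι Z W G : Type*}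
    [NontriviallyNormedField 𝕜] [Fintype ι]
    [NormedAddCommGroup Z] [NormedSpace 𝕜 Z] [CompleteSpace Z]
    [NormedAddCommGroup W] [NormedSpace 𝕜 W] [CompleteSpace W]
    [NormedAddCommGroup G] [NormedSpace 𝕜 G]
    {j : Z →L[𝕜] W} (hj : Function.Surjective j) (ψ : ContinuousMultilinearMap 𝕜 (fun _ : ι => Z) G)
    (hψ : ∀ v k, j (v k) = 0 → ψ v = 0) :
    ∃ ψ' : ContinuousMultilinearMap 𝕜 (fun _ : ι => W) G, ∀ v, ψ' (fun k => j (v k)) = ψ v := by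
  obtain ⟨C, hC, hpre⟩ := j.exists_preimage_norm_le hj
  choose σ hσj hσnorm using hpre
  have hinv : ∀ v v' : ι → Z, (∀ k, j (v k) = j (v' k)) → ψ v = ψ v' := fun v v' h =>
    ψ.toMultilinearMap.map_eq_of_forall_sub_mem (K := LinearMap.ker (j : Z →ₗ[𝕜] W))
      (fun v k hk => hψ v k hk) fun k => by simp [h k]
  let ψ₀ : MultilinearMap 𝕜 (fun _ : ι => W) G :=
    { toFun := fun w => ψ (fun k => σ (w k))
      map_update_add' := fun w m x y => by
        simp only [← Function.comp_def σ, Function.comp_update]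
        rw [← ψ.map_update_add]
        refine hinv _ _ fun k => ?_
        rcases eq_or_ne k m with rfl | hk
        · simp [hσj]
        · simp [hk]
      map_update_smul' := fun w m c x => by
        simp only [← Function.comp_def σ, Function.comp_update]
        rw [← ψ.map_update_smul]
        refine hinv _ _ fun k => ?_
        rcases eq_or_ne k m with rfl | hk
        · simp [hσj]
        · simp [hk] }
  refine ⟨ψ₀.mkContinuous (‖ψ‖ * C ^ Fintype.card ι) fun w => ?_, fun v => ?_⟩
  · calc ‖ψ (fun k => σ (w k))‖ ≤ ‖ψ‖ * ∏ k, ‖σ (w k)‖ := ψ.le_opNorm _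
      _ ≤ ‖ψ‖ * ∏ k, (C * ‖w k‖) := by
        gcongr with k; exact hσnorm _
      _ = ‖ψ‖ * C ^ Fintype.card ι * ∏ k, ‖w k‖ := by
        rw [Finset.prod_mul_distrib, Finset.prod_const, Finset.card_univ, mul_assoc]
  · exact hinv _ _ fun k => hσj _

section ExtendSlot

variable {ι Y Z : Type*} [DecidableEq ι] [NormedAddCommGroup Y] [NormedSpace ℝ Y]
  [NormedAddCommGroup Z] [NormedSpace ℝ Z] (ψ : ContinuousMultilinearMap ℝ (fun _ : ι => Z) ℝ)

theorem ContinuousMultilinearMap.toContinuousLinearMap_update_self (k : ι) (v : ι → Z) (z : Z) :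
    ψ.toContinuousLinearMap (update v k z) k = ψ.toContinuousLinearMap v k := by
  ext; simp

theorem ContinuousMultilinearMap.toContinuousLinearMap_update_add {k m : ι} (hmk : m ≠ k)
    (v : ι → Z) (x y : Z) :
    ψ.toContinuousLinearMap (update v m (x + y)) k =
      ψ.toContinuousLinearMap (update v m x) k + ψ.toContinuousLinearMap (update v m y) k := by
  ext z; simp [update_comm hmk, ψ.map_update_add]

theorem ContinuousMultilinearMap.toContinuousLinearMap_update_smul {k m : ι} (hmk : m ≠ k)
    (v : ι → Z) (c : ℝ) (x : Z) :
    ψ.toContinuousLinearMap (update v m (c • x)) k =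
      c • ψ.toContinuousLinearMap (update v m x) k := by
  ext z; simp [update_comm hmk, ψ.map_update_smul]

noncomputable def ContinuousMultilinearMap.extendSlot (i : Y →L[ℝ] Z)
    (ρ : StrongDual ℝ Y →L[ℝ] StrongDual ℝ Z) (k : ι) : MultilinearMap ℝ (fun _ : ι => Z) ℝ :=
  MultilinearMap.mk' (fun v => ρ ((ψ.toContinuousLinearMap v k).comp i) (v k))
    (fun v m x y => by
      rcases eq_or_ne m k with rfl | hmk
      · simp [ψ.toContinuousLinearMap_update_self]
      · simp [ψ.toContinuousLinearMap_update_add hmk, update_of_ne hmk.symm])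
    (fun v m c x => by
      rcases eq_or_ne m k with rfl | hmk
      · simp [ψ.toContinuousLinearMap_update_self]
      · simp [ψ.toContinuousLinearMap_update_smul hmk, update_of_ne hmk.symm])

theorem ContinuousMultilinearMap.extendSlot_apply (i : Y →L[ℝ] Z)
    (ρ : StrongDual ℝ Y →L[ℝ] StrongDual ℝ Z) (k : ι) (v : ι → Z) :
    ψ.extendSlot i ρ k v = ρ ((ψ.toContinuousLinearMap v k).comp i) (v k) := rfl

theorem ContinuousMultilinearMap.extendSlot_apply_of_mem_range {i : Y →L[ℝ] Z}
    {ρ : StrongDual ℝ Y →L[ℝ] StrongDual ℝ Z} (hρ : ∀ f, (ρ f).comp i = f) {k : ι} {v : ι → Z}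
    (hv : v k ∈ Set.range i) : ψ.extendSlot i ρ k v = ψ v := by
  obtain ⟨y, hy⟩ := hv
  rw [extendSlot_apply, ← hy, ← ContinuousLinearMap.comp_apply, hρ]
  simp [hy]

theorem ContinuousMultilinearMap.extendSlot_apply_eq_zero (i : Y →L[ℝ] Z)
    (ρ : StrongDual ℝ Y →L[ℝ] StrongDual ℝ Z) {k : ι} {v : ι → Z}
    (hv : ∀ y, ψ (update v k (i y)) = 0) : ψ.extendSlot i ρ k v = 0 := by
  have : (ψ.toContinuousLinearMap v k).comp i = 0 := by ext y; simpa using hv y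
  simp [extendSlot_apply, this]

end ExtendSlot

theorem Submodule.topologicalClosure_span_le_ker {𝕜 E F : Type*} [NontriviallyNormedField 𝕜]
    [NormedAddCommGroup E] [NormedSpace 𝕜 E] [NormedAddCommGroup F] [NormedSpace 𝕜 F]
    {s : Set E} {f : E →L[𝕜] F} (h : ∀ x ∈ s, f x = 0) :
    (span 𝕜 s).topologicalClosure ≤ LinearMap.ker (f : E →ₗ[𝕜] F) :=
  (span 𝕜 s).topologicalClosure_minimal (span_le.2 h) f.isClosed_ker

section SlotSubmodule

variable {ι Y Z T : Type*} [NormedAddCommGroup Y] [NormedSpace ℝ Y]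
  [NormedAddCommGroup Z] [NormedSpace ℝ Z] [NormedAddCommGroup T] [NormedSpace ℝ T]

/-- The closed subspace `Z^⊗̂k ⊗̂ E ⊗̂ Z^⊗̂(n-1-k)` of `T = Z^⊗̂n`, for `E ⊆ Z`. -/
def slotSubmodule (φ : ContinuousMultilinearMap ℝ (fun _ : ι => Z) T) (E : Set Z) (k : ι) :
    Submodule ℝ T :=
  (span ℝ {t | ∃ v : ι → Z, v k ∈ E ∧ t = φ v}).topologicalClosure

theorem apply_mem_slotSubmodule (φ : ContinuousMultilinearMap ℝ (fun _ : ι => Z) T) {E : Set Z}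
    {k : ι} {v : ι → Z} (hv : v k ∈ E) : φ v ∈ slotSubmodule φ E k :=
  le_topologicalClosure _ (subset_span ⟨v, hv, rfl⟩)

theorem iSup_slotSubmodule_eq_of_isClosed {φ : ContinuousMultilinearMap ℝ (fun _ : ι => Z) T}
    {E : Set Z} (h : IsClosed ((⨆ k, slotSubmodule φ E k : Submodule ℝ T) : Set T)) :
    ⨆ k, slotSubmodule φ E k =
      (span ℝ {t | ∃ v : ι → Z, (∃ k, v k ∈ E) ∧ t = φ v}).topologicalClosure :=
  le_antisymm
    (iSup_le fun k => topologicalClosure_mono (span_mono fun _ ⟨v, hv, htv⟩ => ⟨v, ⟨k, hv⟩, htv⟩))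
    (topologicalClosure_minimal _ (span_le.2 <| by
      rintro _ ⟨v, ⟨k, hv⟩, rfl⟩
      exact mem_iSup_of_mem k (apply_mem_slotSubmodule φ hv)) h)

theorem norm_slice_le_norm_restrict_slotSubmodule {n : ℕ}
    {φ : ContinuousMultilinearMap ℝ (fun _ : Fin n => Z) T} (H : StrongDual ℝ T) (i : Y →L[ℝ] Z)
    (k : Fin n) (v : Fin n → Z) :
    ‖((H.compContinuousMultilinearMap φ).toContinuousLinearMap v k).comp i‖ ≤
      ‖H.comp (slotSubmodule φ (Set.range i) k).subtypeL‖ * ‖φ‖ * ‖i‖ *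
        ∏ m ∈ Finset.univ \ {k}, ‖v m‖ := by
  set S := slotSubmodule φ (Set.range i) k
  refine ContinuousLinearMap.opNorm_le_bound _ (by positivity) fun y => ?_
  have hmem : φ (update v k (i y)) ∈ S := apply_mem_slotSubmodule φ (by simp)
  calc ‖H (φ (update v k (i y)))‖
      = ‖H.comp S.subtypeL ⟨_, hmem⟩‖ := rfl
    _ ≤ ‖H.comp S.subtypeL‖ * ‖φ (update v k (i y))‖ := (H.comp S.subtypeL).le_opNorm _
    _ ≤ ‖H.comp S.subtypeL‖ * (‖φ‖ * ∏ m, update (fun m => ‖v m‖) k (‖i‖ * ‖y‖) m) := by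
        gcongr
        refine φ.le_opNorm_mul_prod_of_le fun m => ?_
        rcases eq_or_ne m k with rfl | hm
        · simpa using i.le_opNorm y
        · simp [hm]
    _ = ‖H.comp S.subtypeL‖ * ‖φ‖ * ‖i‖ * (∏ m ∈ Finset.univ \ {k}, ‖v m‖) * ‖y‖ := by
        rw [Finset.prod_update_of_mem (Finset.mem_univ k)]; ring

theorem exists_slot_extension {n : ℕ} [CompleteSpace T] {i : Y →L[ℝ] Z}
    {ρ : StrongDual ℝ Y →L[ℝ] StrongDual ℝ Z} (hρ : ∀ f, (ρ f).comp i = f)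
    {φ : ContinuousMultilinearMap ℝ (fun _ : Fin n => Z) T} (hφ : IsProjectiveTensorPower Z n T φ)
    (k : Fin n) (H : StrongDual ℝ T) :
    ∃ H' : StrongDual ℝ T, (∀ t ∈ slotSubmodule φ (Set.range i) k, H' t = H t) ∧
      (∀ m ≠ k, slotSubmodule φ (Set.range i) m ≤ LinearMap.ker (H : T →ₗ[ℝ] ℝ) →
        slotSubmodule φ (Set.range i) m ≤ LinearMap.ker (H' : T →ₗ[ℝ] ℝ)) ∧
      ‖H'‖ ≤ ‖ρ‖ * ‖i‖ * ‖φ‖ * ‖H.comp (slotSubmodule φ (Set.range i) k).subtypeL‖ := by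
  set S := slotSubmodule φ (Set.range i) k
  set ψ := H.compContinuousMultilinearMap φ
  set c := ‖H.comp S.subtypeL‖ * ‖φ‖ * ‖i‖
  have hbound : ∀ v, ‖ψ.extendSlot i ρ k v‖ ≤ ‖ρ‖ * c * ∏ m, ‖v m‖ := fun v => by
    rw [Finset.prod_eq_mul_prod_sdiff_singleton_of_mem (Finset.mem_univ k)]
    calc ‖ψ.extendSlot i ρ k v‖ ≤ ‖ρ‖ * ‖(ψ.toContinuousLinearMap v k).comp i‖ * ‖v k‖ :=
          ρ.le_opNorm₂ _ _
      _ ≤ ‖ρ‖ * (c * ∏ m ∈ Finset.univ \ {k}, ‖v m‖) * ‖v k‖ := by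
          gcongr; exact norm_slice_le_norm_restrict_slotSubmodule H i k v
      _ = _ := by ring
  obtain ⟨H', hH'φ, hH'norm⟩ := hφ.lift ℝ ((ψ.extendSlot i ρ k).mkContinuous _ hbound)
  refine ⟨H', fun t ht => ?_, fun m hmk hm => ?_, ?_⟩
  · have : S ≤ LinearMap.ker ((H' - H : StrongDual ℝ T) : T →ₗ[ℝ] ℝ) :=
      topologicalClosure_span_le_ker fun _ ⟨v, hv, htv⟩ => by
        simp [htv, hH'φ, ψ.extendSlot_apply_of_mem_range hρ hv, ψ]
    simpa [sub_eq_zero] using this ht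
  · refine topologicalClosure_span_le_ker fun _ ⟨v, hv, htv⟩ => ?_
    rw [htv, hH'φ]
    refine ψ.extendSlot_apply_eq_zero i ρ fun y => hm (apply_mem_slotSubmodule φ ?_)
    simpa [update_of_ne hmk] using hv
  · rw [hH'norm]
    refine (MultilinearMap.mkContinuous_norm_le _ (by positivity) _).trans (le_of_eq ?_)
    ring

theorem isClosed_iSup_slotSubmodule {n : ℕ} [CompleteSpace T] {i : Y →L[ℝ] Z}
    {ρ : StrongDual ℝ Y →L[ℝ] StrongDual ℝ Z} (hρ : ∀ f, (ρ f).comp i = f)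
    {φ : ContinuousMultilinearMap ℝ (fun _ : Fin n => Z) T} (hφ : IsProjectiveTensorPower Z n T φ) :
    IsClosed ((⨆ k, slotSubmodule φ (Set.range i) k : Submodule ℝ T) : Set T) := by
  suffices h : ∀ s : Finset (Fin n),
      IsClosed ((⨆ k ∈ s, slotSubmodule φ (Set.range i) k : Submodule ℝ T) : Set T) by
    simpa using h Finset.univ
  intro s
  induction s using Finset.induction_on with
  | empty => simp
  | @insert a s ha ih =>
    rw [Finset.iSup_insert, sup_comm]
    refine isClosed_sup_of_hasBoundedAnnihilatorLift (C := ‖ρ‖ * ‖i‖ * ‖φ‖) ih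
      (isClosed_topologicalClosure _) (by positivity) fun G hG => ?_
    obtain ⟨G', hG'a, hG'ker, hG'norm⟩ := exists_slot_extension hρ hφ a G
    refine ⟨G', iSup₂_le fun k hk => hG'ker k (ne_of_mem_of_not_mem hk ha) ?_, hG'a, hG'norm⟩
    exact (le_iSup₂ (f := fun k (_ : k ∈ s) => slotSubmodule φ (Set.range i) k) k hk).trans hG

end SlotSubmodule

theorem ker_eq_topologicalClosure_span_of_surjective {Z W TZ TW : Type*} {n : ℕ}
    [NormedAddCommGroup Z] [NormedSpace ℝ Z] [CompleteSpace Z]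
    [NormedAddCommGroup W] [NormedSpace ℝ W] [CompleteSpace W]
    [NormedAddCommGroup TZ] [NormedSpace ℝ TZ] [CompleteSpace TZ]
    [NormedAddCommGroup TW] [NormedSpace ℝ TW] [CompleteSpace TW]
    {j : Z →L[ℝ] W} (hj : Function.Surjective j)
    {φZ : ContinuousMultilinearMap ℝ (fun _ : Fin n => Z) TZ}
    (hTZ : IsProjectiveTensorPower Z n TZ φZ)
    {φW : ContinuousMultilinearMap ℝ (fun _ : Fin n => W) TW}
    (hTW : IsProjectiveTensorPower W n TW φW)
    {F : TZ →L[ℝ] TW} (hF : ∀ v : Fin n → Z, F (φZ v) = φW fun k => j (v k)) :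
    LinearMap.ker (F : TZ →ₗ[ℝ] TW) =
      (span ℝ {t | ∃ v : Fin n → Z, (∃ k, j (v k) = 0) ∧ t = φZ v}).topologicalClosure := by
  refine le_antisymm (fun t ht => mem_topologicalClosure_of_forall_dual fun G hG => ?_)
    (topologicalClosure_span_le_ker fun _ ⟨v, ⟨k, hk⟩, htv⟩ => by
      rw [htv, hF]; exact φW.map_coord_zero k hk)
  obtain ⟨ψ, hψ⟩ := (G.compContinuousMultilinearMap φZ).exists_comp_eq_of_surjective hj
    fun v k hk => hG (subset_span ⟨v, ⟨k, hk⟩, rfl⟩)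
  obtain ⟨g, hg, -⟩ := hTW.lift ℝ ψ
  have hGF : G = g.comp F := ContinuousLinearMap.ext_on
    (dense_iff_topologicalClosure_eq_top.2 hTZ.dense) fun _ ⟨v, hv⟩ => by simp [← hv, hF, hg, hψ]
  simp [hGF, show F t = 0 from ht]

theorem kernel_of_tensor_power_of_quotient_map_general
    {Y Z W : Type*}
    [NormedAddCommGroup Y] [NormedSpace ℝ Y]
    [NormedAddCommGroup Z] [NormedSpace ℝ Z] [CompleteSpace Z]
    [NormedAddCommGroup W] [NormedSpace ℝ W] [CompleteSpace W]
    (i : Y →L[ℝ] Z) (j : Z →L[ℝ] W)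
    (hj : Function.Surjective j)
    (hexact : LinearMap.range (i : Y →ₗ[ℝ] Z) = LinearMap.ker (j : Z →ₗ[ℝ] W))
    -- weak admissibility: the dual sequence splits
    (hsplit : ∃ ρ : StrongDual ℝ Y →L[ℝ] StrongDual ℝ Z, ∀ f : StrongDual ℝ Y, (ρ f).comp i = f)
    (n : ℕ)
    {TZ TW : Type*}
    [NormedAddCommGroup TZ] [NormedSpace ℝ TZ] [CompleteSpace TZ]
    [NormedAddCommGroup TW] [NormedSpace ℝ TW] [CompleteSpace TW]
    (φZ : ContinuousMultilinearMap ℝ (fun _ : Fin n => Z) TZ)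
    (hTZ : IsProjectiveTensorPower Z n TZ φZ)
    (φW : ContinuousMultilinearMap ℝ (fun _ : Fin n => W) TW)
    (hTW : IsProjectiveTensorPower W n TW φW)
    (F : TZ →L[ℝ] TW) (hF : ∀ v : Fin n → Z, F (φZ v) = φW fun k => j (v k)) :
    LinearMap.ker (F : TZ →ₗ[ℝ] TW) =
      (⨆ k : Fin n,
        (Submodule.span ℝ
          {t : TZ | ∃ v : Fin n → Z, v k ∈ Set.range i ∧ t = φZ v}).topologicalClosure) ∧
    LinearMap.ker (F : TZ →ₗ[ℝ] TW) =
      (Submodule.span ℝ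
        {t : TZ | ∃ v : Fin n → Z, (∃ k, v k ∈ Set.range i) ∧ t = φZ v}).topologicalClosure := by
  obtain ⟨ρ, hρ⟩ := hsplit
  have hrange : ∀ z, z ∈ Set.range i ↔ j z = 0 := fun z => by
    simpa using SetLike.ext_iff.1 hexact z
  have hker := ker_eq_topologicalClosure_span_of_surjective hj hTZ hTW hF
  simp only [← hrange] at hker
  exact ⟨hker.trans (iSup_slotSubmodule_eq_of_isClosed (isClosed_iSup_slotSubmodule hρ hTZ)).symm,
    hker⟩

/-- Lemma 3.4(ii): For a weakly admissible short exact sequence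
0 → Y →^i Z →^j W → 0 of Banach spaces and every n ≥ 1, the kernel of
j^⊗̂n : Z^⊗̂n → W^⊗̂n equals the sum over k of the closed subspaces
Z^⊗̂(k) ⊗̂ i(Y) ⊗̂ Z^⊗̂(n-1-k) (closed span of elementary tensors whose k-th factor
lies in i(Y)); in particular it is the closed linear span of the elementary tensors
z₁ ⊗ ⋯ ⊗ z_n in which at least one factor belongs to i(Y). -/
theorem kernel_of_tensor_power_of_quotient_map
    {Y Z W : Type*}
    [NormedAddCommGroup Y] [NormedSpace ℝ Y] [CompleteSpace Y]
    [NormedAddCommGroup Z] [NormedSpace ℝ Z] [CompleteSpace Z]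
    [NormedAddCommGroup W] [NormedSpace ℝ W] [CompleteSpace W]
    (i : Y →L[ℝ] Z) (j : Z →L[ℝ] W)
    (hi : Function.Injective i) (hj : Function.Surjective j)
    (hexact : LinearMap.range (i : Y →ₗ[ℝ] Z) = LinearMap.ker (j : Z →ₗ[ℝ] W))
    -- weak admissibility: the dual sequence splits
    (hsplit : ∃ ρ : StrongDual ℝ Y →L[ℝ] StrongDual ℝ Z, ∀ f : StrongDual ℝ Y, (ρ f).comp i = f)
    (n : ℕ) (hn : 1 ≤ n)
    {TZ TW : Type*}
    [NormedAddCommGroup TZ] [NormedSpace ℝ TZ] [CompleteSpace TZ]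
    [NormedAddCommGroup TW] [NormedSpace ℝ TW] [CompleteSpace TW]
    (φZ : ContinuousMultilinearMap ℝ (fun _ : Fin n => Z) TZ)
    (hTZ : IsProjectiveTensorPower Z n TZ φZ)
    (φW : ContinuousMultilinearMap ℝ (fun _ : Fin n => W) TW)
    (hTW : IsProjectiveTensorPower W n TW φW)
    (F : TZ →L[ℝ] TW) (hF : ∀ v : Fin n → Z, F (φZ v) = φW fun k => j (v k)) :
    LinearMap.ker (F : TZ →ₗ[ℝ] TW) =
      (⨆ k : Fin n,
        (Submodule.span ℝ
          {t : TZ | ∃ v : Fin n → Z, v k ∈ Set.range i ∧ t = φZ v}).topologicalClosure) ∧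
    LinearMap.ker (F : TZ →ₗ[ℝ] TW) =
      (Submodule.span ℝ
        {t : TZ | ∃ v : Fin n → Z, (∃ k, v k ∈ Set.range i) ∧ t = φZ v}).topologicalClosure :=
  kernel_of_tensor_power_of_quotient_map_general i j hj hexact hsplit n φZ hTZ φW hTW F hF
end

section
/- Let 0 → B →^i A →^j D → 0 be an extension of Banach algebras (a short exact sequence of Banach algebras with continuous algebra homomorphisms). If B has a left or right bounded approximate identity, then the extension is weakly admissible: there exists a bounded linear operator L : B* → A* with i* ∘ L = id_{B*}. -/
open NormedSpace Filter

/-!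
Since `i` is injective with closed range `ker j`, the open mapping theorem makes `i⁻¹ : ker j → B`
bounded, and since `ker j` is an ideal, `S_α a = i⁻¹ (a · i e_α)` (or `i⁻¹ (i e_α · a)`) is a
uniformly bounded net of operators `A → B` with `S_α (i b) → b`. Along an ultrafilter finer than
the net, `f (S_α a)` converges by compactness of bounded intervals; the limit `L f a` is bilinear
and bounded, and `L f (i b) = f b`.
-/

open Topology Function

lemma Ultrafilter.exists_tendsto_of_norm_le {ι X : Type*} [SeminormedAddCommGroup X] [ProperSpace X]
    (U : Ultrafilter ι) {g : ι → X} {R : ℝ} (hg : ∀ α, ‖g α‖ ≤ R) :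
    ∃ x, Tendsto g U (𝓝 x) := by
  obtain ⟨x, -, hx⟩ := (isCompact_closedBall (0 : X) R).ultrafilter_le_nhds' (U.map g)
    (Ultrafilter.mem_map.2 (univ_mem' fun α => mem_closedBall_zero_iff.2 (hg α)))
  exact ⟨x, hx⟩

section

variable {E F : Type*} [NormedAddCommGroup E] [NormedSpace ℝ E]
  [NormedAddCommGroup F] [NormedSpace ℝ F]

theorem exists_extension_operator_of_approx_leftInverse {ι : Type*} {l : Filter ι} [l.NeBot]
    (S : ι → E →L[ℝ] F) {K : ℝ} (hS : ∀ α, ‖S α‖ ≤ K) (i : F → E)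
    (hSi : ∀ y, Tendsto (fun α => S α (i y)) l (𝓝 y)) :
    ∃ L : StrongDual ℝ F →L[ℝ] StrongDual ℝ E, ∀ f y, L f (i y) = f y := by
  let U := Ultrafilter.of l
  have hbound (f : StrongDual ℝ F) (x : E) (α : ι) : ‖f (S α x)‖ ≤ K * ‖f‖ * ‖x‖ :=
    calc ‖f (S α x)‖ ≤ ‖f‖ * (K * ‖x‖) := f.le_opNorm_of_le ((S α).le_of_opNorm_le (hS α) x)
      _ = K * ‖f‖ * ‖x‖ := by ring
  let Λ (f : StrongDual ℝ F) (x : E) : ℝ := limUnder U fun α => f (S α x)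
  have hΛ (f : StrongDual ℝ F) (x : E) : Tendsto (fun α => f (S α x)) U (𝓝 (Λ f x)) :=
    tendsto_nhds_limUnder (U.exists_tendsto_of_norm_le (hbound f x))
  let Λ₂ : StrongDual ℝ F →ₗ[ℝ] E →ₗ[ℝ] ℝ := LinearMap.mk₂ ℝ Λ
    (fun f g x => ((hΛ f x).add (hΛ g x)).limUnder_eq)
    (fun c f x => ((hΛ f x).const_mul c).limUnder_eq)
    (fun f x x' => by simpa only [Λ, map_add] using ((hΛ f x).add (hΛ f x')).limUnder_eq)
    (fun c f x => by
      simpa only [Λ, map_smul, smul_eq_mul] using ((hΛ f x).const_mul c).limUnder_eq)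
  refine ⟨Λ₂.mkContinuous₂ K fun f x => le_of_tendsto' (hΛ f x).norm (hbound f x), fun f y => ?_⟩
  exact ((f.continuous.tendsto y).comp ((hSi y).mono_left (Ultrafilter.of_le l))).limUnder_eq

theorem exists_approx_leftInverse_of_isClosed_range [CompleteSpace E] [CompleteSpace F]
    {ι : Type*} {l : Filter ι} (i : F →L[ℝ] E) (hi : Injective i)
    (hclosed : IsClosed (Set.range i)) (T : ι → E →L[ℝ] E) (hT_range : ∀ α x, T α x ∈ Set.range i)
    {M : ℝ} (hT : ∀ α, ‖T α‖ ≤ M) (hTi : ∀ y, Tendsto (fun α => T α (i y)) l (𝓝 (i y))) :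
    ∃ (S : ι → E →L[ℝ] F) (K : ℝ), (∀ α, ‖S α‖ ≤ K) ∧
      ∀ y, Tendsto (fun α => S α (i y)) l (𝓝 y) := by
  let σ : LinearMap.range (i : F →ₗ[ℝ] E) →L[ℝ] F := (i.equivRange hi hclosed).symm
  let T' (α : ι) : E →L[ℝ] LinearMap.range (i : F →ₗ[ℝ] E) := (T α).codRestrict _ (hT_range α)
  have hT' (α : ι) : ‖T' α‖ ≤ M :=
    ((T' α).opNorm_le_bound (norm_nonneg _) (T α).le_opNorm).trans (hT α)
  refine ⟨fun α => σ ∘L T' α, ‖σ‖ * M, fun α => ?_, fun y => ?_⟩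
  · exact (σ.opNorm_comp_le _).trans (by gcongr; exact hT' α)
  · have hT'i : Tendsto (fun α => T' α (i y)) l (𝓝 ⟨i y, y, rfl⟩) :=
      tendsto_subtype_rng.2 (hTi y)
    have hσ : σ ⟨i y, y, rfl⟩ = y := i.equivRange_symm_apply hi hclosed y
    have hσT'i := (σ.continuous.tendsto _).comp hT'i
    rwa [hσ] at hσT'i

end

theorem extension_weakly_admissible_of_bounded_approximate_identity_general
    {B A D : Type*}
    [NormedRing B] [NormedAlgebra ℝ B] [CompleteSpace B]
    [NormedRing A] [NormedAlgebra ℝ A] [CompleteSpace A]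
    [NormedRing D] [NormedAlgebra ℝ D]
    (i : B →ₐ[ℝ] A) (j : A →ₐ[ℝ] D)
    (hi_cont : Continuous i) (hj_cont : Continuous j)
    (hi : Function.Injective i)
    (hexact : ∀ a : A, j a = 0 ↔ ∃ b, i b = a)
    -- B has a left or right bounded approximate identity (a bounded net (e_α)):
    (hbai : ∃ (ι : Type) (l : Filter ι) (e : ι → B), l.NeBot ∧
      (∃ C : ℝ, ∀ α, ‖e α‖ ≤ C) ∧
      ((∀ b : B, Tendsto (fun α => b * e α) l (nhds b)) ∨
       (∀ b : B, Tendsto (fun α => e α * b) l (nhds b)))) :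
    ∃ L : StrongDual ℝ B →L[ℝ] StrongDual ℝ A, ∀ (f : StrongDual ℝ B) (b : B), (L f) (i b) = f b := by
  obtain ⟨ι, l, e, hl, ⟨C, hC⟩, hbai⟩ := hbai
  let iL : B →L[ℝ] A := ⟨i.toLinearMap, hi_cont⟩
  have hji (b : B) : j (i b) = 0 := (hexact _).2 ⟨b, rfl⟩
  have hclosed : IsClosed (Set.range iL) := by
    convert isClosed_eq hj_cont continuous_const
    exact Set.ext fun a => (hexact a).symm
  suffices ∃ Φ : A →L[ℝ] A →L[ℝ] A, (∀ α a, Φ (i (e α)) a ∈ Set.range iL) ∧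
      ∀ b, Tendsto (fun α => Φ (i (e α)) (i b)) l (𝓝 (i b)) by
    obtain ⟨Φ, hΦ_range, hΦ_tendsto⟩ := this
    have hΦ_bound (α : ι) : ‖Φ (iL (e α))‖ ≤ ‖Φ‖ * (‖iL‖ * C) :=
      Φ.le_opNorm_of_le (iL.le_opNorm_of_le (hC α))
    obtain ⟨S, K, hS, hSi⟩ := exists_approx_leftInverse_of_isClosed_range iL hi hclosed _
      hΦ_range hΦ_bound hΦ_tendsto
    exact exists_extension_operator_of_approx_leftInverse S hS iL hSi
  rcases hbai with hright | hleft
  · refine ⟨(ContinuousLinearMap.mul ℝ A).flip, fun α a => (hexact _).1 (by simp [hji]),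
      fun b => ?_⟩
    simp only [ContinuousLinearMap.flip_apply, ContinuousLinearMap.mul_apply', ← map_mul]
    exact (hi_cont.tendsto b).comp (hright b)
  · refine ⟨ContinuousLinearMap.mul ℝ A, fun α a => (hexact _).1 (by simp [hji]), fun b => ?_⟩
    simp only [ContinuousLinearMap.mul_apply', ← map_mul]
    exact (hi_cont.tendsto b).comp (hleft b)

/-- Lemma 3.6: Let 0 → B →^i A →^j D → 0 be an extension of Banach
algebras.  If B has a left or right bounded approximate identity, then the extension
is weakly admissible: there is a bounded linear operator L : B* → A* with
i* ∘ L = id_{B*}. -/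
theorem extension_weakly_admissible_of_bounded_approximate_identity
    {B A D : Type*}
    [NormedRing B] [NormedAlgebra ℝ B] [CompleteSpace B]
    [NormedRing A] [NormedAlgebra ℝ A] [CompleteSpace A]
    [NormedRing D] [NormedAlgebra ℝ D] [CompleteSpace D]
    (i : B →ₐ[ℝ] A) (j : A →ₐ[ℝ] D)
    (hi_cont : Continuous i) (hj_cont : Continuous j)
    (hi : Function.Injective i) (hj : Function.Surjective j)
    (hexact : ∀ a : A, j a = 0 ↔ ∃ b, i b = a)
    -- B has a left or right bounded approximate identity (a bounded net (e_α)):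
    (hbai : ∃ (ι : Type) (l : Filter ι) (e : ι → B), l.NeBot ∧
      (∃ C : ℝ, ∀ α, ‖e α‖ ≤ C) ∧
      ((∀ b : B, Tendsto (fun α => b * e α) l (nhds b)) ∨
       (∀ b : B, Tendsto (fun α => e α * b) l (nhds b)))) :
    ∃ L : StrongDual ℝ B →L[ℝ] StrongDual ℝ A, ∀ (f : StrongDual ℝ B) (b : B), (L f) (i b) = f b :=
  extension_weakly_admissible_of_bounded_approximate_identity_general i j hi_cont hj_cont hi hexact
    hbai
end

section
/- Let U be a von Neumann algebra containing a sequence (p_m) of mutually orthogonal, mutually equivalent projections each equivalent to the identity (e.g. a properly infinite von Neumann algebra). Then U admits no non-zero bounded trace: U^{tr} = {f ∈ U* : f(ab) = f(ba) for all a,b} = {0}. In particular B(H)^{tr} = {0} for an infinite-dimensional Hilbert space H. -/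
/-!
Conjugating by an isometry `v` does not change the value of a trace `f`, since
`f (v a v⋆) = f (v⋆ v a) = f a`. With isometries `v₀, …, v_{N-1}` of mutually orthogonal ranges,
the element `b = ∑ vₘ a vₘ⋆` therefore has `f b = N f a`, while the C⋆-identity gives
`‖b‖² = ‖b b⋆‖ = ‖∑ vₘ a a⋆ vₘ⋆‖ ≤ N ‖a‖²`. Hence `N ‖f a‖ ≤ ‖f‖ √N ‖a‖` for every `N`, so `f a = 0`.
-/

open Finset

theorem eq_zero_of_forall_natCast_mul_le {K : Type*} [Field K] [LinearOrder K]
    [IsStrictOrderedRing K] [Archimedean K] {x C : K} (hx : 0 ≤ x) (h : ∀ N : ℕ, N * x ≤ C) :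
    x = 0 := by
  by_contra hne
  have hpos : 0 < x := lt_of_le_of_ne hx (Ne.symm hne)
  obtain ⟨N, hN⟩ := exists_nat_gt (C / x)
  linarith [h N, (div_lt_iff₀ hpos).1 hN]

theorem apply_mul_mul_eq_of_mul_eq_one {M R : Type*} [Monoid M] (f : M → R)
    (hf : ∀ a b, f (a * b) = f (b * a)) {v w : M} (h : w * v = 1) (a : M) :
    f (v * a * w) = f a := by
  rw [mul_assoc, hf, mul_assoc, h, mul_one]

theorem star_mul_eq_zero_of_star_mul_self_eq_one {R : Type*} [MonoidWithZero R] [Star R]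
    {v w : R} (hv : star v * v = 1) (hw : star w * w = 1) (h : v * star v * (w * star w) = 0) :
    star v * w = 0 :=
  calc star v * w = (star v * v) * star v * (w * (star w * w)) := by rw [hv, hw, one_mul, mul_one]
    _ = star v * (v * star v * (w * star w)) * w := by simp only [mul_assoc]
    _ = 0 := by rw [h, mul_zero, zero_mul]

theorem norm_sum_sq_le_of_mul_star_eq_zero {E ι : Type*} [NonUnitalNormedRing E] [StarRing E]
    [CStarRing E] (s : Finset ι) (x : ι → E)
    (h : ∀ i ∈ s, ∀ j ∈ s, i ≠ j → x i * star (x j) = 0) :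
    ‖∑ i ∈ s, x i‖ ^ 2 ≤ ∑ i ∈ s, ‖x i‖ ^ 2 := by
  have hdiag : (∑ i ∈ s, x i) * star (∑ i ∈ s, x i) = ∑ i ∈ s, x i * star (x i) := by
    rw [star_sum, sum_mul_sum]
    exact sum_congr rfl fun i hi => sum_eq_single_of_mem i hi fun j hj hji => h i hi j hj hji.symm
  calc ‖∑ i ∈ s, x i‖ ^ 2 = ‖∑ i ∈ s, x i * star (x i)‖ := by
        rw [sq, ← CStarRing.norm_self_mul_star, hdiag]
    _ ≤ ∑ i ∈ s, ‖x i * star (x i)‖ := norm_sum_le _ _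
    _ = ∑ i ∈ s, ‖x i‖ ^ 2 := by simp only [CStarRing.norm_self_mul_star, sq]

section CStarRing

variable {A : Type*} [NormedRing A] [StarRing A] [CStarRing A]

theorem norm_le_one_of_star_mul_self_eq_one {v : A} (hv : star v * v = 1) : ‖v‖ ≤ 1 := by
  have h : ‖v‖ * ‖v‖ ≤ 1 := by
    rw [← CStarRing.norm_star_mul_self, hv]
    exact IsStarProjection.norm_le _ (.one A)
  nlinarith [norm_nonneg v]

theorem norm_mul_mul_star_le_of_star_mul_self_eq_one {v : A} (hv : star v * v = 1) (a : A) :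
    ‖v * a * star v‖ ≤ ‖a‖ :=
  calc ‖v * a * star v‖ ≤ ‖v‖ * ‖a‖ * ‖star v‖ := norm_mul₃_le
    _ ≤ 1 * ‖a‖ * 1 := by
      rw [norm_star]
      have hv1 := norm_le_one_of_star_mul_self_eq_one hv
      gcongr
    _ = ‖a‖ := by ring

theorem card_mul_norm_sq_le_of_isometries {𝕜 ι : Type*} [RCLike 𝕜] [NormedAlgebra 𝕜 A]
    (f : StrongDual 𝕜 A) (hf : ∀ a b, f (a * b) = f (b * a)) (s : Finset ι) (v : ι → A)
    (hv : ∀ i ∈ s, star (v i) * v i = 1)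
    (horth : ∀ i ∈ s, ∀ j ∈ s, i ≠ j → star (v i) * v j = 0) (a : A) :
    #s * ‖f a‖ ^ 2 ≤ (‖f‖ * ‖a‖) ^ 2 := by
  set b := ∑ i ∈ s, v i * a * star (v i)
  have hfb : f b = #s * f a := by
    rw [map_sum, sum_congr rfl fun i hi => apply_mul_mul_eq_of_mul_eq_one f hf (hv i hi) a,
      sum_const, nsmul_eq_mul]
  have hb : ‖b‖ ^ 2 ≤ #s * ‖a‖ ^ 2 := by
    refine (norm_sum_sq_le_of_mul_star_eq_zero s _ fun i hi j hj hij => ?_).trans ?_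
    · simp only [star_mul, star_star, mul_assoc]
      rw [← mul_assoc (star (v i)), horth i hi j hj hij, zero_mul, mul_zero, mul_zero]
    · calc ∑ i ∈ s, ‖v i * a * star (v i)‖ ^ 2 ≤ ∑ i ∈ s, ‖a‖ ^ 2 := by
            gcongr with i hi
            exact norm_mul_mul_star_le_of_star_mul_self_eq_one (hv i hi) a
        _ = #s * ‖a‖ ^ 2 := by rw [sum_const, nsmul_eq_mul]
  rcases (#s).eq_zero_or_pos with hs | hs
  · simp only [hs, Nat.cast_zero, zero_mul]
    positivity
  refine le_of_mul_le_mul_left ?_ (Nat.cast_pos.2 hs : (0 : ℝ) < #s)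
  calc (#s : ℝ) * (#s * ‖f a‖ ^ 2) = ‖f b‖ ^ 2 := by
        rw [hfb, norm_mul, RCLike.norm_natCast]; ring
    _ ≤ (‖f‖ * ‖b‖) ^ 2 := by gcongr; exact f.le_opNorm b
    _ ≤ ‖f‖ ^ 2 * (#s * ‖a‖ ^ 2) := by rw [mul_pow]; gcongr
    _ = #s * (‖f‖ * ‖a‖) ^ 2 := by ring

end CStarRing

theorem no_bounded_traces_of_properly_infinite_general
    {U : Type*} [NormedRing U] [StarRing U] [CStarRing U]
    [NormedAlgebra ℂ U]
    (p : ℕ → U)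
    (horth : ∀ m k, m ≠ k → p m * p k = 0)
    (hequiv : ∀ m, ∃ v : U, star v * v = 1 ∧ v * star v = p m) :
    ∀ f : StrongDual ℂ U, (∀ a b : U, f (a * b) = f (b * a)) → f = 0 := by
  intro f hf
  ext a
  choose v hv hrange using hequiv
  have horthv : ∀ m k, m ≠ k → star (v m) * v k = 0 := fun m k hmk =>
    star_mul_eq_zero_of_star_mul_self_eq_one (hv m) (hv k) (by rw [hrange, hrange, horth m k hmk])
  have hbound (N : ℕ) : N * ‖f a‖ ^ 2 ≤ (‖f‖ * ‖a‖) ^ 2 := by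
    simpa using card_mul_norm_sq_le_of_isometries f hf (range N) v (fun m _ => hv m)
      (fun m _ k _ => horthv m k) a
  rw [zero_apply, ← norm_eq_zero, ← sq_eq_zero_iff]
  exact eq_zero_of_forall_natCast_mul_le (by positivity) hbound

/-- Let U be a (unital) von Neumann / C*-algebra containing a sequence
(p_m) of mutually orthogonal, mutually equivalent projections, each Murray–von Neumann
equivalent to the identity (e.g. a properly infinite von Neumann algebra).  Then U has
no non-zero bounded trace: every continuous linear functional vanishing on all
commutators ab − ba is zero. -/
theorem no_bounded_traces_of_properly_infinite
    {U : Type*} [NormedRing U] [StarRing U] [CStarRing U]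
    [NormedAlgebra ℂ U] [CompleteSpace U] [StarModule ℂ U]
    (p : ℕ → U)
    (hproj : ∀ m, IsIdempotentElem (p m) ∧ star (p m) = p m)
    (horth : ∀ m k, m ≠ k → p m * p k = 0)
    (hequiv : ∀ m, ∃ v : U, star v * v = 1 ∧ v * star v = p m) :
    ∀ f : StrongDual ℂ U, (∀ a b : U, f (a * b) = f (b * a)) → f = 0 :=
  no_bounded_traces_of_properly_infinite_general p horth hequiv
end
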